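/- Let B₁,…,B_N (N ≥ 1) be nonempty finite axis sets with union B̄, let T be an extrusion generated set associated to this collection, and let Tᵢ := P[B̄→Bᵢ](T) be its projections. Then the family (T₁,…,T_N) is a fixed point of the distributed iteration: for every index i, Tᵢ = P[B_{Mᵢ}→Bᵢ]( ⋂_{j∈Mᵢ} E[Bⱼ→B_{Mᵢ}](Tⱼ) ). Consequently, if the distributed iteration is initialized with Sᵢ(0) = Tᵢ for every i, then Sᵢ(κ) = Tᵢ for every i and every κ ∈ ℕ. -/

import Mathlib

/-!
Each `Tᵢ` is recovered from the neighbourhood intersection because that intersection contains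
the extrusion of `Tᵢ` itself (so projecting back lands in `Tᵢ`), while every point of `T`
restricted to `B_{Mᵢ}` lies in all the extrusions of the `Tⱼ` (so nothing of `Tᵢ` is lost).
The iteration started at a fixed point then never moves.
-/

/-- A point over an axis set `B` (a finite subset of `ℕ`): an assignment of a real
number to each coordinate in `B`. -/
abbrev Pt (B : Finset ℕ) : Type := {n : ℕ // n ∈ B} → ℝ

/-- Projection (restriction) of a single point over `B₂` onto a sub-axis-set `B₁ ⊆ B₂`. -/
def projPt {B₁ B₂ : Finset ℕ} (h : B₁ ⊆ B₂) (v : Pt B₂) : Pt B₁ :=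
  fun x => v ⟨x.1, h x.2⟩

/-- Projection of a set of points over `B₂` onto `B₁ ⊆ B₂`. -/
def proj {B₁ B₂ : Finset ℕ} (h : B₁ ⊆ B₂) (V : Set (Pt B₂)) : Set (Pt B₁) :=
  projPt h '' V

/-- Extrusion of a set of points over `B₁` to the larger axis set `B₂ ⊇ B₁`. -/
def extr {B₁ B₂ : Finset ℕ} (h : B₁ ⊆ B₂) (W : Set (Pt B₁)) : Set (Pt B₂) :=
  { v | projPt h v ∈ W }

/-- The union of the axis sets `B₁, …, B_N`. -/
def Bunion {N : ℕ} (B : Fin N → Finset ℕ) : Finset ℕ :=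
  Finset.univ.biUnion B

lemma subset_Bunion {N : ℕ} (B : Fin N → Finset ℕ) (i : Fin N) : B i ⊆ Bunion B :=
  Finset.subset_biUnion_of_mem B (Finset.mem_univ i)

/-- The neighbourhood `Mᵢ = {j : Bᵢ ∩ Bⱼ ≠ ∅}` of node `i`. -/
def Mset {N : ℕ} (B : Fin N → Finset ℕ) (i : Fin N) : Finset (Fin N) :=
  Finset.univ.filter (fun j => (B i ∩ B j).Nonempty)

/-- The axis set `B_{Mᵢ} = ⋃_{j ∈ Mᵢ} Bⱼ`. -/
def BMset {N : ℕ} (B : Fin N → Finset ℕ) (i : Fin N) : Finset ℕ :=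
  (Mset B i).biUnion B

lemma subset_BMset {N : ℕ} (B : Fin N → Finset ℕ) {i j : Fin N} (h : j ∈ Mset B i) :
    B j ⊆ BMset B i :=
  Finset.subset_biUnion_of_mem B h

lemma self_mem_Mset {N : ℕ} {B : Fin N → Finset ℕ} {i : Fin N} (h : (B i).Nonempty) :
    i ∈ Mset B i :=
  Finset.mem_filter.mpr ⟨Finset.mem_univ i, by rwa [Finset.inter_self]⟩

lemma proj_extr_subset {A B : Finset ℕ} (h : A ⊆ B) (W : Set (Pt A)) :
    proj h (extr h W) ⊆ W := by
  rintro _ ⟨v, hv, rfl⟩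
  exact hv

lemma proj_iInter_extr_proj {ι : Type*} {A : ι → Finset ℕ} {C D : Finset ℕ}
    (hAC : ∀ j, A j ⊆ C) (hCD : C ⊆ D) (V : Set (Pt D)) (i : ι) :
    proj (hAC i) (⋂ j, extr (hAC j) (proj ((hAC j).trans hCD) V)) =
      proj ((hAC i).trans hCD) V := by
  refine Set.Subset.antisymm ?_ ?_
  · exact (Set.image_mono (Set.iInter_subset _ i)).trans (proj_extr_subset _ _)
  · rintro _ ⟨v, hv, rfl⟩
    exact ⟨projPt hCD v, Set.mem_iInter.mpr fun j => ⟨v, hv, rfl⟩, rfl⟩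

lemma Function.IsFixedPt.eq_of_succ_eq {α : Type*} {f : α → α} {x : α} (hx : f.IsFixedPt x)
    {u : ℕ → α} (h0 : u 0 = x) (hu : ∀ n, u (n + 1) = f (u n)) (n : ℕ) : u n = x := by
  induction n with
  | zero => exact h0
  | succ n ih => rw [hu, ih, hx]

lemma BMset_subset_Bunion {N : ℕ} (B : Fin N → Finset ℕ) (i : Fin N) : BMset B i ⊆ Bunion B :=
  Finset.biUnion_subset.mpr fun j _ => subset_Bunion B j

def distributedStep {N : ℕ} (B : Fin N → Finset ℕ) (hBne : ∀ i, (B i).Nonempty)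
    (S : (i : Fin N) → Set (Pt (B i))) (i : Fin N) : Set (Pt (B i)) :=
  proj (subset_BMset B (self_mem_Mset (hBne i)))
    (⋂ j : {j // j ∈ Mset B i}, extr (subset_BMset B j.2) (S j.1))

lemma isFixedPt_distributedStep_proj {N : ℕ} (B : Fin N → Finset ℕ) (hBne : ∀ i, (B i).Nonempty)
    (T : Set (Pt (Bunion B))) :
    (distributedStep B hBne).IsFixedPt fun i => proj (subset_Bunion B i) T :=
  funext fun i => proj_iInter_extr_proj (A := fun j : {j // j ∈ Mset B i} => B j.1)
    (fun j => subset_BMset B j.2) (BMset_subset_Bunion B i) T ⟨i, self_mem_Mset (hBne i)⟩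

theorem proj_extrusion_generated_fixed_point_general
    {N : ℕ} (B : Fin N → Finset ℕ)
    (hBne : ∀ i, (B i).Nonempty)
    (T : Set (Pt (Bunion B))) :
    (∀ i : Fin N,
      proj (subset_Bunion B i) T =
        proj (subset_BMset B (self_mem_Mset (hBne i)))
          (⋂ j : {j // j ∈ Mset B i},
            extr (subset_BMset B j.2) (proj (subset_Bunion B j.1) T))) ∧
    (∀ S : (i : Fin N) → ℕ → Set (Pt (B i)),
      (∀ i, S i 0 = proj (subset_Bunion B i) T) →
      (∀ (i : Fin N) (κ : ℕ), S i (κ + 1) =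
        proj (subset_BMset B (self_mem_Mset (hBne i)))
          (⋂ j : {j // j ∈ Mset B i}, extr (subset_BMset B j.2) (S j.1 κ))) →
      ∀ (i : Fin N) (κ : ℕ), S i κ = proj (subset_Bunion B i) T) := by
  have hfix := isFixedPt_distributedStep_proj B hBne T
  refine ⟨fun i => (congrFun hfix i).symm, fun S h0 hstep i κ => ?_⟩
  have hiter := hfix.eq_of_succ_eq (u := fun κ i => S i κ) (funext h0)
    (fun κ => funext fun i => hstep i κ) κ
  exact congrFun hiter i

/-- Theorem 2: the projections `Tᵢ = P[B̄→Bᵢ](T)` of an extrusion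
generated set `T` form a fixed point of the distributed iteration; consequently the
iteration initialized at the `Tᵢ` stays at the `Tᵢ` forever. -/
theorem proj_extrusion_generated_fixed_point
    {N : ℕ} (hN : 1 ≤ N) (B : Fin N → Finset ℕ)
    (hBne : ∀ i, (B i).Nonempty)
    (T : Set (Pt (Bunion B)))
    (hT : ∃ S : (i : Fin N) → Set (Pt (B i)),
      T = ⋂ i, extr (subset_Bunion B i) (S i)) :
    (∀ i : Fin N,
      proj (subset_Bunion B i) T =
        proj (subset_BMset B (self_mem_Mset (hBne i)))
          (⋂ j : {j // j ∈ Mset B i},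
            extr (subset_BMset B j.2) (proj (subset_Bunion B j.1) T))) ∧
    (∀ S : (i : Fin N) → ℕ → Set (Pt (B i)),
      (∀ i, S i 0 = proj (subset_Bunion B i) T) →
      (∀ (i : Fin N) (κ : ℕ), S i (κ + 1) =
        proj (subset_BMset B (self_mem_Mset (hBne i)))
          (⋂ j : {j // j ∈ Mset B i}, extr (subset_BMset B j.2) (S j.1 κ))) →
      ∀ (i : Fin N) (κ : ℕ), S i κ = proj (subset_Bunion B i) T) :=
  proj_extrusion_generated_fixed_point_general B hBne T
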